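/- Let q ≥ 3 and n ≥ 1 be integers and let F_q^⋆ = F_q \ (𝓔_q ∪ {1_q}). If F_q^⋆ is n-cell implementable under scenario (∗∗), then the whole set F_q is n-cell implementable under scenario (∗∗). -/

import Mathlib

/-!
Put `A j = {x | u x j = 0}` and `B j = {x | u x j = 1}`. The inputs rejected by a key `ϑ` form
the union over the cells `j` of `B j` (if `ϑ j = 0`), `A j` (if `ϑ j = 1`) or `∅` (if `ϑ j = ∗`).
Implementing `F_q^⋆` makes every nonempty set of inputs of size `≠ q - 1` such a union. For a
singleton `{x}` this needs a cell with a side equal to `{x}`, which gives `q ≤ n` unless some cell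
has sides exactly `{x}` and `{y}`. Such a cell is removed by induction on the number of inputs: if
another cell separates `x` and `y`, drop `x`, `y` and both cells; otherwise identify `y` with `x`
and drop the cell (for three inputs a direct count). Conversely, `q ≤ n` cells implement every
function: input `x` puts `0` in cell `x` and `∗` elsewhere, and `ϑ_f` puts `1` in the cells of
the zeros of `f`.
-/

/-- The alphabet 𝔹• = {0, 1, ∗, •}. -/
inductive BB : Type
  | zero
  | one
  | star
  | reject
deriving DecidableEq

instance instFintypeBB : Fintype BB :=
  ⟨{BB.zero, BB.one, BB.star, BB.reject}, fun x => by cases x <;> simp⟩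

/-- The cell function T : 𝔹• × 𝔹• → 𝔹: T(u,ϑ) = 1 iff u = ∗, or ϑ = ∗,
or u,ϑ ∈ 𝔹 with u = ϑ. -/
def Tcell : BB → BB → Bool
  | BB.star, _ => true
  | _, BB.star => true
  | BB.zero, BB.zero => true
  | BB.one, BB.one => true
  | _, _ => false

/-- The word-level function T(u,ϑ) = ⋀_{j<n} T(u_j, ϑ_j). -/
def Tword {n : ℕ} (u θ : Fin n → BB) : Bool :=
  decide (∀ j, Tcell (u j) (θ j) = true)

/-- The alphabet 𝔹 = {0,1} ⊆ 𝔹•. -/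
def Bcirc : Set BB := {BB.zero, BB.one}

/-- The alphabet 𝔹∗ = {0,1,∗} ⊆ 𝔹•. -/
def Bstar : Set BB := {BB.zero, BB.one, BB.star}

/-- The full alphabet 𝔹•. -/
def Bdot : Set BB := Set.univ

/-- A family Φ of functions {0,…,q−1} → 𝔹 is n-cell implementable under
scenario (A,B) if there are mappings u : {0,…,q−1} → A^n and ϑ : Φ → B^n
with f(x) = T(u(x), ϑ(f)) for all f ∈ Φ and x. -/
def Implementable (A B : Set BB) (n q : ℕ) (Φ : Set (Fin q → Bool)) : Prop :=
  ∃ u : Fin q → Fin n → BB, ∃ θ : (Fin q → Bool) → Fin n → BB,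
    (∀ x j, u x j ∈ A) ∧ (∀ f ∈ Φ, ∀ j, θ f j ∈ B) ∧
    (∀ f ∈ Φ, ∀ x, f x = Tword (u x) (θ f))

/-- The family 𝓔_q = { x ↦ [x = t] : t ∈ [q⟩ }. -/
def Eset (q : ℕ) : Set (Fin q → Bool) :=
  { f | ∃ t : Fin q, f = fun x => decide (x = t) }

/-- The family 𝓝_q = { x ↦ [x ≠ t] : t ∈ [q⟩ }. -/
def Nset (q : ℕ) : Set (Fin q → Bool) :=
  { f | ∃ t : Fin q, f = fun x => decide (x ≠ t) }

/-- The family 𝓖_q = { x ↦ [x ≥ t] : t ∈ [q⟩ }. -/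
def Gset (q : ℕ) : Set (Fin q → Bool) :=
  { f | ∃ t : Fin q, f = fun x => decide (t ≤ x) }

/-- The family 𝓛_q = { x ↦ [x ≤ t] : t ∈ [q⟩ }. -/
def Lset (q : ℕ) : Set (Fin q → Bool) :=
  { f | ∃ t : Fin q, f = fun x => decide (x ≤ t) }

open Finset

section SideUnion

variable {α ι : Type*} [DecidableEq α]

def IsSideUnion (A B : ι → Finset α) (J : Finset ι) (S : Finset α) : Prop :=
  ∃ σ : ι → Finset α, (∀ j ∈ J, σ j = A j ∨ σ j = B j ∨ σ j = ∅) ∧ J.biUnion σ = S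

namespace IsSideUnion

variable {A B : ι → Finset α} {J : Finset ι} {S : Finset α}

theorem exists_side_eq_singleton {x : α} (h : IsSideUnion A B J {x}) :
    ∃ j ∈ J, A j = {x} ∨ B j = {x} := by
  obtain ⟨σ, hσ, hU⟩ := h
  obtain ⟨j, hj, hxj⟩ := mem_biUnion.1 (hU ▸ mem_singleton_self x : x ∈ J.biUnion σ)
  have hσj : σ j = {x} :=
    (subset_singleton_iff.1 (hU ▸ subset_biUnion_of_mem σ hj)).resolve_left
      (ne_empty_of_mem hxj)
  rcases hσ j hj with h | h | h
  · exact ⟨j, hj, .inl (h ▸ hσj)⟩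
  · exact ⟨j, hj, .inr (h ▸ hσj)⟩
  · exact absurd (h ▸ hσj) (singleton_ne_empty x).symm

theorem restrict {J' : Finset ι} (h : IsSideUnion A B J S) (hJ : J' ⊆ J)
    (hout : ∀ j ∈ J, j ∉ J' → ¬ A j ⊆ S ∧ ¬ B j ⊆ S) : IsSideUnion A B J' S := by
  obtain ⟨σ, hσ, hU⟩ := h
  refine ⟨σ, fun j hj => hσ j (hJ hj), ?_⟩
  have hsub : ∀ j ∈ J, σ j ⊆ S := fun j hj => hU ▸ subset_biUnion_of_mem σ hj
  refine (biUnion_subset.2 fun j hj => hsub j (hJ hj)).antisymm fun z hz => ?_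
  obtain ⟨j, hj, hzj⟩ := mem_biUnion.1 (hU ▸ hz)
  by_cases hj' : j ∈ J'
  · exact mem_biUnion.2 ⟨j, hj', hzj⟩
  · rcases hσ j hj with h | h | h
    · exact absurd (h ▸ hsub j hj) (hout j hj hj').1
    · exact absurd (h ▸ hsub j hj) (hout j hj hj').2
    · simp [h] at hzj

theorem collapse [DecidableEq ι] {x y : α} {j : ι} (hxy : x ≠ y) (hj : j ∈ J) (hA : A j = {x})
    (hB : B j = {y}) (hS : y ∈ S ↔ x ∈ S) (h : IsSideUnion A B J S) :
    IsSideUnion (fun b => (A b).image (Function.update id y x))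
      (fun b => (B b).image (Function.update id y x)) (J.erase j) (S.erase y) := by
  obtain ⟨σ, hσ, hU⟩ := h
  set g := Function.update id y x
  have hsub : ∀ b ∈ J, σ b ⊆ S := fun b hb => hU ▸ subset_biUnion_of_mem σ hb
  have hσj : σ j ⊆ {x, y} ∧ ¬ (x ∈ σ j ∧ y ∈ σ j) := by
    rcases hσ j hj with h | h | h <;> simp [h, hA, hB, hxy, hxy.symm]
  have hcover : ∀ z ∈ S, z ∉ σ j → ∃ b ∈ J.erase j, z ∈ σ b := fun z hz hzj => by
    obtain ⟨b, hb, hzb⟩ := mem_biUnion.1 (hU ▸ hz)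
    exact ⟨b, mem_erase.2 ⟨fun h => hzj (h ▸ hzb), hb⟩, hzb⟩
  refine ⟨fun b => (σ b).image g, fun b hb => ?_, ?_⟩
  · rcases hσ b (mem_of_mem_erase hb) with h | h | h <;> simp [h]
  ext z
  simp only [mem_biUnion, mem_image, mem_erase]
  constructor
  · rintro ⟨b, ⟨-, hb⟩, w, hw, rfl⟩
    have hwS := hsub b hb hw
    by_cases hwy : w = y
    · subst hwy; simp [g, hxy, hS.1 hwS]
    · simp [g, hwy, hwS]
  · rintro ⟨hzy, hzS⟩
    have hgx : g x = x := Function.update_of_ne hxy _ _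
    by_cases hzx : z = x
    · subst hzx
      by_cases hzj : z ∈ σ j
      · obtain ⟨b, hb, hyb⟩ := hcover y (hS.2 hzS) fun hyj => hσj.2 ⟨hzj, hyj⟩
        exact ⟨b, mem_erase.1 hb, y, hyb, Function.update_self _ _ _⟩
      · obtain ⟨b, hb, hzb⟩ := hcover z hzS hzj
        exact ⟨b, mem_erase.1 hb, z, hzb, hgx⟩
    · obtain ⟨b, hb, hzb⟩ := hcover z hzS fun hzj => by simpa [hzx, hzy] using hσj.1 hzj
      exact ⟨b, mem_erase.1 hb, z, hzb, Function.update_of_ne hzy _ _⟩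

end IsSideUnion

theorem disjoint_image_update {C D : Finset α} {x y : α} (h : Disjoint C D)
    (hxy : ¬ (x ∈ C ∧ y ∈ D)) (hyx : ¬ (y ∈ C ∧ x ∈ D)) :
    Disjoint (C.image (Function.update id y x)) (D.image (Function.update id y x)) := by
  simp only [disjoint_left, mem_image]
  rintro _ ⟨c, hc, rfl⟩ ⟨d, hd, hdc⟩
  by_cases hcy : c = y <;> by_cases hdy : d = y <;>
    simp_all [disjoint_left]

/-- With `A j = {x | u x j = 0}` and `B j = {x | u x j = 1}`, these are the conditions that
the zero sets of the functions in `F_q^⋆` impose on `u`. -/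
def Realizes (A B : ι → Finset α) (J : Finset ι) (P : Finset α) : Prop :=
  (∀ j ∈ J, Disjoint (A j) (B j)) ∧
    ∀ S ⊆ P, S.Nonempty → (S.card ≤ 1 ∨ S.card + 1 ≠ P.card) → IsSideUnion A B J S

namespace Realizes

variable {A B : ι → Finset α} {J : Finset ι} {P : Finset α}

theorem exists_side_eq_singleton (h : Realizes A B J P) {z : α} (hz : z ∈ P) :
    ∃ j ∈ J, A j = {z} ∨ B j = {z} :=
  (h.2 {z} (singleton_subset_iff.2 hz) (singleton_nonempty z)
    (.inl (card_singleton z).le)).exists_side_eq_singleton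

theorem card_le_or_exists_pair (h : Realizes A B J P) :
    P.card ≤ J.card ∨
      ∃ x ∈ P, ∃ y ∈ P, x ≠ y ∧ ∃ j ∈ J, A j = {x} ∧ B j = {y} := by
  rcases P.eq_empty_or_nonempty with rfl | ⟨z, hz⟩
  · simp
  have : Nonempty ι := ⟨(h.exists_side_eq_singleton hz).choose⟩
  choose! ψ hψJ hψ using fun z (hz : z ∈ P) => h.exists_side_eq_singleton hz
  by_cases hinj : Set.InjOn ψ (P : Set α)
  · exact .inl (card_le_card_of_injOn ψ hψJ hinj)
  obtain ⟨x, hx, y, hy, hψxy, hxy⟩ : ∃ x ∈ P, ∃ y ∈ P, ψ x = ψ y ∧ x ≠ y := by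
    simpa [Set.InjOn] using hinj
  right
  rcases hψ x hx with hxA | hxB <;> rcases hψ y hy with hyA | hyB
  · exact absurd (singleton_injective (hxA.symm.trans (hψxy ▸ hyA))) hxy
  · exact ⟨x, hx, y, hy, hxy, ψ x, hψJ x hx, hxA, hψxy ▸ hyB⟩
  · exact ⟨y, hy, x, hx, hxy.symm, ψ x, hψJ x hx, hψxy ▸ hyA, hxB⟩
  · exact absurd (singleton_injective (hxB.symm.trans (hψxy ▸ hyB))) hxy

theorem three_le_card (h : Realizes A B J P) (hP : P.card = 3) {x y : α} (hx : x ∈ P)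
    (hy : y ∈ P) (hxy : x ≠ y) {j : ι} (hj : j ∈ J) (hA : A j = {x}) (hB : B j = {y}) :
    3 ≤ J.card := by
  obtain ⟨z, hz⟩ : (P \ {x, y}).Nonempty := by
    rw [← card_pos]
    have := card_sdiff_add_card_eq_card (insert_subset hx (singleton_subset_iff.2 hy))
    rw [card_pair hxy] at this
    omega
  simp only [mem_sdiff, mem_insert, mem_singleton, not_or] at hz
  obtain ⟨hzP, hzx, hzy⟩ := hz
  obtain ⟨σ, hσ, hU⟩ := h.2 P subset_rfl ⟨x, hx⟩ (.inr (by omega))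
  have hcover : ∀ w ∈ P, ∃ b ∈ J, w ∈ σ b := fun w hw => mem_biUnion.1 (hU ▸ hw)
  have hσj : ∀ w ∈ σ j, w = x ∨ w = y := by
    rcases hσ j hj with h | h | h <;> simp [h, hA, hB]
  obtain ⟨w, hwP, hwz, hwj⟩ : ∃ w ∈ P, w ≠ z ∧ w ∉ σ j := by
    by_cases hxj : x ∈ σ j
    · refine ⟨y, hy, Ne.symm hzy, fun hyj => ?_⟩
      rcases hσ j hj with h | h | h <;> simp_all
    · exact ⟨x, hx, Ne.symm hzx, hxj⟩
  obtain ⟨bw, hbw, hwbw⟩ := hcover w hwP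
  obtain ⟨bz, hbz, hzbz⟩ := hcover z hzP
  obtain ⟨jz, hjz, hjzz⟩ := h.exists_side_eq_singleton hzP
  have hbwj : bw ≠ j := fun h => hwj (h ▸ hwbw)
  have hbzj : bz ≠ j := fun h => by rcases hσj z (h ▸ hzbz) with h | h <;> contradiction
  have hjzj : jz ≠ j := by
    rintro rfl
    rcases hjzz with h | h
    · exact hzx (singleton_injective (h.symm.trans hA))
    · exact hzy (singleton_injective (h.symm.trans hB))
  rw [Nat.succ_le_iff, two_lt_card]
  by_cases hbb : bw = bz
  · subst hbb
    refine ⟨j, hj, bw, hbw, jz, hjz, hbwj.symm, hjzj.symm, fun hjz => ?_⟩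
    subst hjz
    have hdisj := disjoint_left.1 (h.1 bw hbw)
    rcases hσ bw hbw with hs | hs | hs <;> rcases hjzz with hz | hz <;>
      simp_all
  · exact ⟨j, hj, bw, hbw, bz, hbz, hbwj.symm, hbzj.symm, hbb⟩

variable [DecidableEq ι]

theorem sdiff_pair (h : Realizes A B J P) {x y : α} (hx : x ∈ P) (hy : y ∈ P) (hxy : x ≠ y)
    {j j' : ι} (hA : A j = {x}) (hB : B j = {y})
    (hsep : (x ∈ A j' ∧ y ∈ B j') ∨ (y ∈ A j' ∧ x ∈ B j')) :
    Realizes A B (J \ {j, j'}) (P \ {x, y}) := by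
  refine ⟨fun b hb => h.1 b (mem_sdiff.1 hb).1, fun S hS hSne _ => ?_⟩
  have hcard := card_sdiff_add_card_eq_card (insert_subset hx (singleton_subset_iff.2 hy))
  rw [card_pair hxy] at hcard
  have hSP : S.card + 1 ≠ P.card := by have := card_le_card hS; omega
  have hxS : x ∉ S := fun hxS => by simpa using hS hxS
  have hyS : y ∉ S := fun hyS => by simpa using hS hyS
  refine (h.2 S (hS.trans sdiff_subset) hSne (.inr hSP)).restrict sdiff_subset
    fun b hb hb' => ?_
  obtain rfl | rfl : b = j ∨ b = j' := by simpa [hb, or_iff_not_imp_left] using hb'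
  · simp [hA, hB, hxS, hyS]
  · rcases hsep with ⟨hxA, hyB⟩ | ⟨hyA, hxB⟩
    · exact ⟨fun hAS => hxS (hAS hxA), fun hBS => hyS (hBS hyB)⟩
    · exact ⟨fun hAS => hyS (hAS hyA), fun hBS => hxS (hBS hxB)⟩

theorem collapse (h : Realizes A B J P) {x y : α} (hx : x ∈ P) (hy : y ∈ P) (hxy : x ≠ y)
    (hP : P.card ≠ 3) {j : ι} (hj : j ∈ J) (hA : A j = {x}) (hB : B j = {y})
    (hsep : ∀ b ∈ J, b ≠ j → ¬ (x ∈ A b ∧ y ∈ B b) ∧ ¬ (y ∈ A b ∧ x ∈ B b)) :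
    Realizes (fun b => (A b).image (Function.update id y x))
      (fun b => (B b).image (Function.update id y x)) (J.erase j) (P.erase y) := by
  refine ⟨fun b hb => ?_, fun S hS hSne hScard => ?_⟩
  · obtain ⟨hbj, hbJ⟩ := mem_erase.1 hb
    exact disjoint_image_update (h.1 b hbJ) (hsep b hbJ hbj).1 (hsep b hbJ hbj).2
  have hyS : y ∉ S := fun hyS => by simpa using hS hyS
  have hPy := card_erase_add_one hy
  by_cases hxS : x ∈ S
  · -- `S` is the collapse of `insert y S`, which is not of size `|P| - 1` as `|P| ≠ 3`.
    have hT : (insert y S).card + 1 ≠ P.card := by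
      rw [card_insert_of_notMem hyS]
      have := hSne.card_pos
      omega
    have hTP : insert y S ⊆ P := insert_subset hy (hS.trans (erase_subset y P))
    simpa [erase_insert hyS] using
      (h.2 _ hTP (insert_nonempty y S) (.inr hT)).collapse hxy hj hA hB (by simp [hxS])
  · have hSP : S.card + 1 ≠ P.card := by
      have : S ⊆ (P.erase y).erase x := fun z hz => mem_erase.2 ⟨fun h => hxS (h ▸ hz), hS hz⟩
      have := card_le_card this
      have := card_erase_add_one (mem_erase.2 ⟨hxy, hx⟩)
      omega
    simpa [erase_eq_of_notMem hyS] using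
      (h.2 S (hS.trans (erase_subset y P)) hSne (.inr hSP)).collapse hxy hj hA hB
        (by simp [hxS, hyS])

theorem card_le_card (h : Realizes A B J P) : P.card ≤ J.card := by
  induction P using Finset.strongInduction generalizing J A B with
  | H P ih =>
  obtain hle | ⟨x, hx, y, hy, hxy, j, hj, hA, hB⟩ := h.card_le_or_exists_pair
  · exact hle
  by_cases hsep : ∃ j' ∈ J, j' ≠ j ∧ ((x ∈ A j' ∧ y ∈ B j') ∨ (y ∈ A j' ∧ x ∈ B j'))
  · obtain ⟨j', hj', hj'j, hsep⟩ := hsep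
    have hxyP : {x, y} ⊆ P := insert_subset hx (singleton_subset_iff.2 hy)
    have hjJ : {j, j'} ⊆ J := insert_subset hj (singleton_subset_iff.2 hj')
    have hind := ih _ (sdiff_ssubset hxyP (insert_nonempty x {y}))
      (h.sdiff_pair hx hy hxy hA hB hsep)
    have hPc := card_sdiff_add_card_eq_card hxyP
    have hJc := card_sdiff_add_card_eq_card hjJ
    rw [card_pair hxy] at hPc
    rw [card_pair hj'j.symm] at hJc
    omega
  by_cases hP : P.card = 3
  · exact hP ▸ h.three_le_card hP hx hy hxy hj hA hB
  have hind := ih _ (erase_ssubset hy) (h.collapse hx hy hxy hP hj hA hB fun b hb hbj =>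
    ⟨fun h => hsep ⟨b, hb, hbj, .inl h⟩, fun h => hsep ⟨b, hb, hbj, .inr h⟩⟩)
  have hPc := card_erase_add_one hy
  have hJc := card_erase_add_one hj
  omega

end Realizes

end SideUnion

theorem Tcell_eq_false_iff {a b : BB} (ha : a ∈ Bstar) (hb : b ∈ Bstar) :
    Tcell a b = false ↔ (a = BB.zero ∧ b = BB.one) ∨ (a = BB.one ∧ b = BB.zero) := by
  simp only [Bstar, Set.mem_insert_iff, Set.mem_singleton_iff] at ha hb
  rcases ha with rfl | rfl | rfl <;> rcases hb with rfl | rfl | rfl <;> simp [Tcell]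

theorem Tword_eq_false_iff {n : ℕ} (u θ : Fin n → BB) :
    Tword u θ = false ↔ ∃ j, Tcell (u j) (θ j) = false := by
  simp [Tword]

theorem isSideUnion_rejected {n q : ℕ} {u : Fin q → Fin n → BB} (hu : ∀ x j, u x j ∈ Bstar)
    {v : Fin n → BB} (hv : ∀ j, v j ∈ Bstar) :
    IsSideUnion (fun j => univ.filter (u · j = BB.zero)) (fun j => univ.filter (u · j = BB.one))
      univ (univ.filter fun x => Tword (u x) v = false) := by
  refine ⟨fun j => univ.filter fun x => Tcell (u x j) (v j) = false, fun j _ => ?_, ?_⟩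
  · have hv' := hv j
    simp only [Bstar, Set.mem_insert_iff, Set.mem_singleton_iff] at hv'
    simp only [Tcell_eq_false_iff (hu _ j) (hv j)]
    rcases hv' with h | h | h <;> simp [h]
  · ext x
    simp [Tword_eq_false_iff]

theorem not_mem_Eset_of_card {q : ℕ} {S : Finset (Fin q)} (hS : S.card + 1 ≠ q) :
    (fun x => decide (x ∉ S)) ∉ Eset q := by
  rintro ⟨t, ht⟩
  have hSt : S = {t}ᶜ := by
    ext x
    have := decide_eq_decide.1 (congrFun ht x)
    simp only [mem_compl, mem_singleton]
    tauto
  have := card_compl_add_card {t}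
  simp_all

theorem le_of_implementable_Fstar {q n : ℕ} (hq : 3 ≤ q)
    (h : Implementable Bstar Bstar n q { f | f ∉ Eset q ∧ f ≠ fun _ => true }) : q ≤ n := by
  obtain ⟨u, θ, hu, hθ, himp⟩ := h
  have hreal : Realizes (fun j => univ.filter (u · j = BB.zero))
      (fun j => univ.filter (u · j = BB.one)) univ (univ : Finset (Fin q)) := by
    refine ⟨fun j _ => disjoint_filter.2 fun x _ h0 h1 => by simp [h0] at h1,
      fun S _ hSne hS => ?_⟩
    have hSq : S.card + 1 ≠ q := by simp only [card_univ, Fintype.card_fin] at hS; omega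
    obtain ⟨s, hs⟩ := hSne
    set f : Fin q → Bool := fun x => decide (x ∉ S)
    have hf : f ∉ Eset q ∧ f ≠ fun _ => true :=
      ⟨not_mem_Eset_of_card hSq, fun hf => by simpa [f, hs] using congrFun hf s⟩
    have hrej : (univ.filter fun x => Tword (u x) (θ f) = false) = S := by
      ext x
      rw [mem_filter, ← himp f hf x]
      simp [f]
    exact hrej ▸ isSideUnion_rejected hu (hθ f hf)
  simpa using hreal.card_le_card

theorem implementable_univ_of_le {q n : ℕ} (h : q ≤ n) :
    Implementable Bstar Bstar n q Set.univ := by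
  refine ⟨fun x j => if j = Fin.castLE h x then BB.zero else BB.star,
    fun f j => if hj : (j : ℕ) < q then (if f ⟨j, hj⟩ then BB.star else BB.one) else BB.star,
    fun x j => ?_, fun f _ j => ?_, fun f _ x => ?_⟩
  · dsimp only
    split_ifs <;> simp [Bstar]
  · dsimp only
    split_ifs <;> simp [Bstar]
  · cases hfx : f x
    · refine (decide_eq_false fun hall => ?_).symm
      simpa [hfx, Tcell] using hall (Fin.castLE h x)
    · refine (decide_eq_true fun j => ?_).symm
      by_cases hj : j = Fin.castLE h x
      · simp [hj, hfx, Tcell]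
      · simp only [if_neg hj]
        rfl

theorem Fsetstar_implementable_implies_Fset_general (q n : ℕ) (hq : 3 ≤ q)
    (h : Implementable Bstar Bstar n q
      { f | f ∉ Eset q ∧ f ≠ fun _ => true }) :
    Implementable Bstar Bstar n q Set.univ :=
  implementable_univ_of_le (le_of_implementable_Fstar hq h)

theorem Fsetstar_implementable_implies_Fset (q n : ℕ) (hq : 3 ≤ q) (hn : 1 ≤ n)
    (h : Implementable Bstar Bstar n q
      { f | f ∉ Eset q ∧ f ≠ fun _ => true }) :
    Implementable Bstar Bstar n q Set.univ :=
  Fsetstar_implementable_implies_Fset_general q n hq h
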